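/- Let V ⊂ Z^d be an affinely independent set of d+1 vectors and w ∈ Z^d, with unique coefficients α_v satisfying w = Σ_{v∈V} α_v v and 1 = Σ_{v∈V} α_v. Define N_{V,w} = wwᵀ − Σ_{v∈V} α_v vvᵀ. Then for any symmetric matrix Q and any c ∈ R^d and r ∈ R with Q[c−v] = r² for all v ∈ V, one has ⟨N_{V,w}, Q⟩ = Q[c−w] − r², where ⟨A,B⟩ = Trace(AB). -/
import Mathlib

open Matrix

def Qf {d : ℕ} (Q : Matrix (Fin d) (Fin d) ℝ) (x : Fin d → ℝ) : ℝ :=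
  dotProduct x (Q.mulVec x)

lemma tr_vecMulVec {d : ℕ} (Q : Matrix (Fin d) (Fin d) ℝ) (x y : Fin d → ℝ) :
    trace (vecMulVec x y * Q) = dotProduct y (Q.mulVec x) := by
  simp only [trace, diag, Matrix.mul_apply, vecMulVec_apply, dotProduct, mulVec,
    Finset.mul_sum]
  rw [Finset.sum_comm]
  exact Finset.sum_congr rfl fun j _ => Finset.sum_congr rfl fun i _ => by ring

lemma B_symm {d : ℕ} (Q : Matrix (Fin d) (Fin d) ℝ) (hQ : Q.IsSymm)
    (x y : Fin d → ℝ) : dotProduct x (Q.mulVec y) = dotProduct y (Q.mulVec x) := by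
  rw [dotProduct_mulVec, ← mulVec_transpose, hQ.eq, dotProduct_comm]

theorem regulator_evaluation {d : ℕ} (v : Fin (d + 1) → Fin d → ℝ)
    (hvZ : ∀ i j, ∃ z : ℤ, v i j = (z : ℝ))
    (hv : AffineIndependent ℝ v)
    (w : Fin d → ℝ) (hwZ : ∀ j, ∃ z : ℤ, w j = (z : ℝ))
    (α : Fin (d + 1) → ℝ)
    (hα1 : ∑ i, α i = 1) (hαw : w = ∑ i, α i • v i)
    (Q : Matrix (Fin d) (Fin d) ℝ) (hQ : Q.IsSymm)
    (c : Fin d → ℝ) (r : ℝ) (hc : ∀ i, Qf Q (c - v i) = r ^ 2) :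
    trace ((vecMulVec w w - ∑ i, α i • vecMulVec (v i) (v i)) * Q)
      = Qf Q (c - w) - r ^ 2 := by
  have hBvv : ∀ i, dotProduct (v i) (Q.mulVec (v i))
      = r ^ 2 - dotProduct c (Q.mulVec c) + 2 * dotProduct c (Q.mulVec (v i)) := by
    intro i
    have := hc i
    simp only [Qf, sub_dotProduct, mulVec_sub, dotProduct_sub] at this
    rw [B_symm Q hQ (v i) c] at this
    linarith
  have hBcw : dotProduct c (Q.mulVec w) = ∑ i, α i * dotProduct c (Q.mulVec (v i)) := by
    have hmv : Q.mulVec w = ∑ i, α i • Q.mulVec (v i) := by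
      rw [hαw, ← Q.mulVecLin_apply, map_sum]
      simp [Matrix.mulVecLin_apply]
    rw [hmv]
    simp only [dotProduct, Finset.sum_apply, Pi.smul_apply, smul_eq_mul, Finset.mul_sum]
    rw [Finset.sum_comm]
    exact Finset.sum_congr rfl fun i _ => Finset.sum_congr rfl fun j _ => by ring
  -- LHS expansion
  rw [sub_mul, Finset.sum_mul, trace_sub, trace_sum]
  simp only [smul_mul_assoc, trace_smul, tr_vecMulVec, smul_eq_mul]
  have hsum : ∑ i, α i * dotProduct (v i) (Q.mulVec (v i))
      = r ^ 2 - dotProduct c (Q.mulVec c) + 2 * dotProduct c (Q.mulVec w) := by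
    calc ∑ i, α i * dotProduct (v i) (Q.mulVec (v i))
        = ∑ i, (α i * (r ^ 2 - dotProduct c (Q.mulVec c))
            + 2 * (α i * dotProduct c (Q.mulVec (v i)))) := by
          refine Finset.sum_congr rfl fun i _ => ?_
          rw [hBvv i]; ring
      _ = (∑ i, α i) * (r ^ 2 - dotProduct c (Q.mulVec c))
            + 2 * ∑ i, α i * dotProduct c (Q.mulVec (v i)) := by
          rw [Finset.sum_add_distrib, ← Finset.sum_mul, ← Finset.mul_sum]
      _ = r ^ 2 - dotProduct c (Q.mulVec c) + 2 * dotProduct c (Q.mulVec w) := by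
          rw [hα1, hBcw]; ring
  rw [hsum]
  simp only [Qf, sub_dotProduct, mulVec_sub, dotProduct_sub]
  rw [B_symm Q hQ w c]
  ring
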